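/- For every n ≥ 3 and pairwise distinct colors x, y, z, a₀, a₁, …, a_{n-1}, the Type C sock ordering a₀ x a_{n-1} y z y x a_{n-2} a_{n-1} a_{n-3} a_{n-2} ⋯ a₀ a₁ (whose tail consists of the consecutive pairs a_i a_{i+1} for i = n-2 down to 0) is 2-bounded, not foot-sortable, and minimal, i.e., deleting any single entry yields a foot-sortable sock ordering. -/

import Mathlib

open List

universe u

variable {Γ : Type u}

/-- No three letters `a <ℓ b <ℓ c` occur in `S` as a subsequence in the order `b, c, a`. -/
def NoBCA (S : List Γ) (le : Γ → Γ → Prop) : Prop :=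
  ∀ a b c : Γ, le a b → a ≠ b → le b c → b ≠ c → ¬ ([b, c, a] <+ S)

/-- The pair `(S, le)` is foot-sortable: some linear order extending `le` avoids the
`b, c, a` configuration. -/
def PairFootSortable (S : List Γ) (le : Γ → Γ → Prop) : Prop :=
  ∃ le' : Γ → Γ → Prop, IsLinearOrder Γ le' ∧ (∀ x y, le x y → le' x y) ∧ NoBCA S le'

/-- The sock ordering `S` is foot-sortable. -/
def FootSortable (S : List Γ) : Prop :=
  ∃ le : Γ → Γ → Prop, IsLinearOrder Γ le ∧ NoBCA S le

/-- `(S, le)` is `Γ'`-decided. -/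
def DecidedBy (S : List Γ) (le : Γ → Γ → Prop) (Γ' : Set Γ) : Prop :=
  ¬ PairFootSortable S le ∨
    ∃ le' : Γ → Γ → Prop, IsLinearOrder Γ le' ∧ (∀ x y, le x y → le' x y) ∧
      (∃ m ∈ Γ', ∀ x, le' m x) ∧ NoBCA S le'

/-- `le` is a simple partial order with respect to `S`: there is a prefix of `S`
such that `x ≥ y` iff `x = y` or `x y` occurs as a subsequence of the prefix. -/
def SimpleOrder (S : List Γ) (le : Γ → Γ → Prop) : Prop :=
  ∃ k ≤ S.length, ∀ x y : Γ, le y x ↔ (x = y ∨ [x, y] <+ S.take k)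

/-- Index of the second occurrence of `a` in `S` (meaningful when `a` occurs twice). -/
def secondIdx [DecidableEq Γ] (S : List Γ) (a : Γ) : ℕ :=
  S.idxOf a + 1 + (S.drop (S.idxOf a + 1)).idxOf a

/-- The letters of `S` strictly between the first two occurrences of `a`. -/
def betweenFirstTwo [DecidableEq Γ] (S : List Γ) (a : Γ) : List Γ :=
  (S.drop (S.idxOf a + 1)).takeWhile (fun c => c != a)

/-- Every color occurs at most twice. -/
def TwoBounded [DecidableEq Γ] (S : List Γ) : Prop := ∀ x : Γ, S.count x ≤ 2

/-- A minimal non-foot-sortable 2-bounded sock ordering. -/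
def Critical [DecidableEq Γ] (S : List Γ) : Prop :=
  TwoBounded S ∧ ¬ FootSortable S ∧ ∀ i < S.length, FootSortable (S.eraseIdx i)

/-- The tail `a_{n-2} a_{n-1} a_{n-3} a_{n-2} ⋯ a₀ a₁`. -/
def tailPairs (a : ℕ → Γ) (n : ℕ) : List Γ :=
  ((List.range (n - 1)).reverse).flatMap fun i => [a i, a (i + 1)]

/-- Type A: `x a₀ y a_{n-1} x a_{n-2} a_{n-1} ⋯ a₀ a₁`. -/
def typeA (a : ℕ → Γ) (x y : Γ) (n : ℕ) : List Γ :=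
  x :: a 0 :: y :: a (n - 1) :: x :: tailPairs a n

/-- Type B: `a₀ x y a_{n-1} x y a_{n-2} a_{n-1} ⋯ a₀ a₁`. -/
def typeB (a : ℕ → Γ) (x y : Γ) (n : ℕ) : List Γ :=
  a 0 :: x :: y :: a (n - 1) :: x :: y :: tailPairs a n

/-- Type B': `a₀ y x a_{n-1} x y a_{n-2} a_{n-1} ⋯ a₀ a₁`. -/
def typeB' (a : ℕ → Γ) (x y : Γ) (n : ℕ) : List Γ :=
  a 0 :: y :: x :: a (n - 1) :: x :: y :: tailPairs a n

/-- Type C: `a₀ x a_{n-1} y z y x a_{n-2} a_{n-1} ⋯ a₀ a₁`. -/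
def typeC (a : ℕ → Γ) (x y z : Γ) (n : ℕ) : List Γ :=
  a 0 :: x :: a (n - 1) :: y :: z :: y :: x :: tailPairs a n

/-- `S` contains `P` as a pattern. -/
def ContainsPattern {Δ : Type*} (S : List Γ) (P : List Δ) : Prop :=
  ∃ f : Δ → Γ, (∀ i ∈ P, ∀ j ∈ P, f i = f j → i = j) ∧ P.map f <+ S

/-- The 14 sporadic critical sock orderings, with `a,b,c,d,e,f` encoded as `0,…,5`. -/
def sporadicPatterns : List (List ℕ) :=
  [[0,1,2,3,1,0,2,3], [0,1,2,3,4,3,0,1,2],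
   [0,1,2,0,3,1,3,2], [0,1,2,1,3,0,3,2], [0,1,2,3,1,0,3,2], [0,1,2,3,2,0,3,1],
   [0,1,2,3,2,4,0,4,1], [0,1,2,3,4,3,0,2,1],
   [0,1,2,3,1,2,0,3], [0,1,2,3,2,1,0,3], [0,1,2,3,4,3,1,0,2],
   [0,1,2,0,1,3,4,3,2], [0,1,2,3,0,3,4,3,2], [0,1,2,3,2,0,4,5,4,1]]

/-- The forbidden patterns: the 14 sporadic orderings and the four infinite families,
realized over `ℕ` with `aᵢ = i`, `x = n`, `y = n + 1`, `z = n + 2`. -/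
def Forbidden (P : List ℕ) : Prop :=
  P ∈ sporadicPatterns ∨
    (∃ n, 2 ≤ n ∧ P = typeA (fun i => i) n (n + 1) n) ∨
    (∃ n, 3 ≤ n ∧ P = typeB (fun i => i) n (n + 1) n) ∨
    (∃ n, 3 ≤ n ∧ P = typeB' (fun i => i) n (n + 1) n) ∨
    (∃ n, 3 ≤ n ∧ P = typeC (fun i => i) n (n + 1) (n + 2) n)

section AuxiliaryLemmas

/-! ### Numeric avoidance machinery -/

/-- numeric avoidance: no pattern `p q s` with `s < p < q`. -/
def Avoid (L : List ℕ) : Prop := ∀ p q s : ℕ, s < p → p < q → ¬ ([p, q, s] <+ L)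

/-- all ascent bottoms are at most `M`. -/
def AscBnd (L : List ℕ) (M : ℕ) : Prop := ∀ p q : ℕ, [p, q] <+ L → p < q → p ≤ M

def JL : ℕ → ℕ → List ℕ
  | _, 0 => []
  | m, (k+1) => (m+1) :: m :: JL (m+1) k

lemma length_JL : ∀ m k, (JL m k).length = 2 * k
  | _, 0 => rfl
  | m, (k+1) => by rw [JL]; simp [length_JL (m+1) k]; omega

lemma mem_JL : ∀ {v m k : ℕ}, v ∈ JL m k → m ≤ v ∧ v ≤ m + k := by
  intro v m k h
  induction k generalizing m with
  | zero => simp [JL] at h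
  | succ k ih =>
    rw [JL] at h
    rcases List.mem_cons.mp h with rfl | h
    · omega
    rcases List.mem_cons.mp h with rfl | h
    · omega
    · have := ih h; omega

lemma sub2_cons {α : Type*} {p q h : α} {T : List α} :
    [p, q] <+ h :: T ↔ (p = h ∧ q ∈ T) ∨ [p, q] <+ T := by
  rw [List.sublist_cons_iff]
  constructor
  · rintro (hs | ⟨r, hr, hrs⟩)
    · exact Or.inr hs
    · rcases r with _ | ⟨b, r⟩ <;> simp_all [List.singleton_sublist]
  · rintro (⟨rfl, hq⟩ | hs)
    · exact Or.inr ⟨[q], rfl, List.singleton_sublist.mpr hq⟩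
    · exact Or.inl hs

lemma sub3_cons {α : Type*} {p q s h : α} {T : List α} :
    [p, q, s] <+ h :: T ↔ (p = h ∧ [q, s] <+ T) ∨ [p, q, s] <+ T := by
  rw [List.sublist_cons_iff]
  constructor
  · rintro (hs | ⟨r, hr, hrs⟩)
    · exact Or.inr hs
    · rcases r with _ | ⟨b, r⟩ <;> simp_all
  · rintro (⟨rfl, hq⟩ | hs)
    · exact Or.inr ⟨[q, s], rfl, hq⟩
    · exact Or.inl hs

lemma pair_split {α : Type*} {p q : α} {A B : List α} (h : [p, q] <+ A ++ B) :
    [p, q] <+ A ∨ ([p] <+ A ∧ [q] <+ B) ∨ [p, q] <+ B := by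
  rw [List.sublist_append_iff] at h
  obtain ⟨l1, l2, heq, h1, h2⟩ := h
  rcases l1 with _ | ⟨a, _ | ⟨b, _ | ⟨c, l1⟩⟩⟩
  · simp only [List.nil_append] at heq; subst heq
    exact Or.inr (Or.inr h2)
  · obtain ⟨rfl, rfl⟩ : p = a ∧ [q] = l2 := by simpa using heq
    exact Or.inr (Or.inl ⟨h1, h2⟩)
  · obtain ⟨rfl, rfl, rfl⟩ : p = a ∧ q = b ∧ l2 = [] := by simpa using heq
    exact Or.inl h1
  · have := congrArg List.length heq; simp at this

lemma triple_split {α : Type*} {p q s : α} {A B : List α} (h : [p, q, s] <+ A ++ B) :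
    [p, q, s] <+ A ∨ ([p, q] <+ A ∧ [s] <+ B) ∨ [q, s] <+ B := by
  rw [List.sublist_append_iff] at h
  obtain ⟨l1, l2, heq, h1, h2⟩ := h
  rcases l1 with _ | ⟨a, _ | ⟨b, _ | ⟨c, _ | ⟨d, l1⟩⟩⟩⟩
  · simp only [List.nil_append] at heq; subst heq
    exact Or.inr (Or.inr ((List.sublist_cons_self p [q, s]).trans h2))
  · obtain ⟨rfl, rfl⟩ : p = a ∧ [q, s] = l2 := by simpa using heq
    exact Or.inr (Or.inr h2)
  · obtain ⟨rfl, rfl, rfl⟩ : p = a ∧ q = b ∧ [s] = l2 := by simpa using heq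
    exact Or.inr (Or.inl ⟨h1, h2⟩)
  · obtain ⟨rfl, rfl, rfl, rfl⟩ : p = a ∧ q = b ∧ s = c ∧ l2 = [] := by simpa using heq
    exact Or.inl h1
  · have := congrArg List.length heq; simp at this

lemma sub2_JL : ∀ {p q m k : ℕ}, [p, q] <+ JL m k → p ≤ q + 1 := by
  intro p q m k h
  induction k generalizing m with
  | zero => simp [JL] at h
  | succ k ih =>
    rw [JL] at h
    rcases sub2_cons.mp h with ⟨rfl, hq⟩ | h
    · rcases List.mem_cons.mp hq with rfl | hq
      · omega
      · have := mem_JL hq; omega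
    rcases sub2_cons.mp h with ⟨rfl, hq⟩ | h
    · have := mem_JL hq; omega
    · exact ih h

lemma avoid_append_JL {H : List ℕ} {m k : ℕ} (h1 : Avoid H) (h2 : AscBnd H m) :
    Avoid (H ++ JL m k) := by
  intro p q s hs hpq hsub
  rcases triple_split hsub with h | ⟨ha, hb⟩ | h
  · exact h1 p q s hs hpq h
  · have := mem_JL (List.singleton_sublist.mp hb)
    have := h2 p q ha hpq; omega
  · have := sub2_JL h; omega

lemma avoid_append_single {G : List ℕ} {v : ℕ} (h1 : Avoid G) (h2 : AscBnd G v) :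
    Avoid (G ++ [v]) := by
  intro p q s hs hpq hsub
  rcases triple_split hsub with h | ⟨ha, hb⟩ | h
  · exact h1 p q s hs hpq h
  · have : s = v := by simpa using List.singleton_sublist.mp hb
    have := h2 p q ha hpq; omega
  · have := h.length_le; simp at this

lemma ascbnd_mono {L : List ℕ} {M M' : ℕ} (h : AscBnd L M) (hM : M ≤ M') : AscBnd L M' :=
  fun p q hs hlt => le_trans (h p q hs hlt) hM

lemma ascbnd_append_JL {G : List ℕ} {m k M : ℕ} (h : AscBnd G M) (h2 : m + k ≤ M + 1) :
    AscBnd (G ++ JL m k) M := by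
  intro p q hsub hlt
  rcases pair_split hsub with hh | ⟨ha, hb⟩ | hh
  · exact h p q hh hlt
  · have := mem_JL (List.singleton_sublist.mp hb); omega
  · have h3 := mem_JL (List.singleton_sublist.mp ((List.sublist_cons_self p [q]).trans hh))
    omega

lemma ascbnd_append_single {G : List ℕ} {v M : ℕ} (h : AscBnd G M) (h2 : v ≤ M + 1) :
    AscBnd (G ++ [v]) M := by
  intro p q hsub hlt
  rcases pair_split hsub with hh | ⟨ha, hb⟩ | hh
  · exact h p q hh hlt
  · have : q = v := by simpa using List.singleton_sublist.mp hb
    omega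
  · have := hh.length_le; simp at this

/-! ### tailPairs structure -/

lemma tailPairs_zero (a : ℕ → Γ) : tailPairs a 0 = [] := rfl
lemma tailPairs_one (a : ℕ → Γ) : tailPairs a 1 = [] := rfl

lemma tailPairs_succ (a : ℕ → Γ) (m : ℕ) :
    tailPairs a (m + 2) = a m :: a (m + 1) :: tailPairs a (m + 1) := by
  show ((List.range (m + 1)).reverse).flatMap _ = _
  rw [List.range_succ, List.reverse_append]
  simp [tailPairs]

lemma tailPairs_congr {a b : ℕ → Γ} {n : ℕ} (h : ∀ i < n, a i = b i) :
    tailPairs a n = tailPairs b n := by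
  apply List.flatMap_congr
  intro i hi
  rw [List.mem_reverse, List.mem_range] at hi
  rw [h i (by omega), h (i+1) (by omega)]

lemma map_tailPairs {Δ : Type*} (f : Γ → Δ) (a : ℕ → Γ) (n : ℕ) :
    (tailPairs a n).map f = tailPairs (fun i => f (a i)) n := by
  simp [tailPairs, List.map_flatMap]

lemma length_tailPairs (a : ℕ → Γ) : ∀ n, (tailPairs a n).length = 2 * (n - 1)
  | 0 => rfl
  | 1 => rfl
  | (m+2) => by
    rw [tailPairs_succ]
    simp [length_tailPairs a (m+1)]; omega

lemma pair_sublist_tailPairs (a : ℕ → Γ) : ∀ n i, i + 2 ≤ n → [a i, a (i+1)] <+ tailPairs a n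
  | 0, i, h => by omega
  | 1, i, h => by omega
  | (m+2), i, h => by
    rw [tailPairs_succ]
    rcases Nat.lt_or_ge i m with hi | hi
    · exact ((pair_sublist_tailPairs a (m+1) i (by omega)).cons (a (m+1))).cons (a m)
    · have hieq : i = m := by omega
      subst hieq
      exact (List.nil_sublist _).cons₂ (a (i+1)) |>.cons₂ (a i)

lemma mem_tailPairs {a : ℕ → Γ} {k n : ℕ} (hk : k < n) (hn : 2 ≤ n) : a k ∈ tailPairs a n := by
  rcases Nat.lt_or_ge k (n-1) with h | h
  · exact (pair_sublist_tailPairs a n k (by omega)).subset (by simp)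
  · have hk' : k = n - 1 := by omega
    have h2 : n - 2 + 1 = k := by omega
    have := (pair_sublist_tailPairs a n (n-2) (by omega)).subset
      (show a ((n-2)+1) ∈ [a (n-2), a ((n-2)+1)] by simp)
    rwa [h2] at this

lemma mem_tailPairs_iff {a : ℕ → Γ} {n : ℕ} {γ : Γ} :
    γ ∈ tailPairs a n ↔ ∃ i, i < n - 1 ∧ (γ = a i ∨ γ = a (i + 1)) := by
  simp [tailPairs, List.mem_flatMap, or_comm, eq_comm]

lemma tailPairs_desc : ∀ (n b : ℕ), tailPairs (fun i => b + (n - 1) - i) n = JL b (n - 1)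
  | 0, b => rfl
  | 1, b => rfl
  | (m+2), b => by
    rw [tailPairs_succ]
    have h1 : b + (m + 2 - 1) - m = b + 1 := by omega
    have h2 : b + (m + 2 - 1) - (m+1) = b := by omega
    rw [h1, h2]
    have h3 : tailPairs (fun i => b + (m + 2 - 1) - i) (m+1)
        = tailPairs (fun i => (b+1) + ((m+1) - 1) - i) (m+1) :=
      tailPairs_congr (by intro i hi; omega)
    rw [h3, tailPairs_desc (m+1) (b+1)]
    show (b+1) :: b :: JL (b+1) m = JL b (m+1)
    rw [JL]

lemma tailPairs_W (p : ℕ) : ∀ (n b : ℕ), p + 2 ≤ n →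
    tailPairs (fun i => b + (n - 1 - i) + (if i ≤ n - 2 - p then 2 else 0)) n
      = JL b p ++ ([b + p + 3, b + p] ++ JL (b + p + 3) (n - 2 - p)) := by
  induction p with
  | zero =>
    intro n b hn
    obtain ⟨m, rfl⟩ : ∃ m, n = m + 2 := ⟨n - 2, by omega⟩
    rw [tailPairs_succ]
    have h1 : b + (m + 2 - 1 - m) + (if m ≤ m + 2 - 2 - 0 then 2 else 0) = b + 3 := by
      rw [if_pos (by omega)]; omega
    have h2 : b + (m + 2 - 1 - (m+1)) + (if m + 1 ≤ m + 2 - 2 - 0 then 2 else 0) = b := by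
      rw [if_neg (by omega)]; omega
    rw [h1, h2]
    have h3 : tailPairs (fun i => b + (m + 2 - 1 - i) + (if i ≤ m + 2 - 2 - 0 then 2 else 0)) (m+1)
        = tailPairs (fun i => (b+3) + ((m+1) - 1) - i) (m+1) := by
      apply tailPairs_congr
      intro i hi
      rw [if_pos (show i ≤ m + 2 - 2 - 0 by omega)]; omega
    rw [h3, tailPairs_desc (m+1) (b+3)]
    simp [JL]
  | succ p ih =>
    intro n b hn
    obtain ⟨m, rfl⟩ : ∃ m, n = m + 2 := ⟨n - 2, by omega⟩
    rw [tailPairs_succ]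
    have h1 : b + (m + 2 - 1 - m) + (if m ≤ m + 2 - 2 - (p+1) then 2 else 0)
        = b + 1 := by rw [if_neg (by omega)]; omega
    have h2 : b + (m + 2 - 1 - (m+1)) + (if m + 1 ≤ m + 2 - 2 - (p+1) then 2 else 0)
        = b := by rw [if_neg (by omega)]; omega
    rw [h1, h2]
    have h3 : tailPairs (fun i => b + (m + 2 - 1 - i) + (if i ≤ m + 2 - 2 - (p+1) then 2 else 0))
          (m+1)
        = tailPairs (fun i => (b+1) + ((m+1) - 1 - i) + (if i ≤ (m+1) - 2 - p then 2 else 0))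
          (m+1) := by
      apply tailPairs_congr
      intro i hi
      by_cases hc : i ≤ m + 2 - 2 - (p+1)
      · rw [if_pos hc, if_pos (by omega)]; omega
      · rw [if_neg hc, if_neg (by omega)]; omega
    rw [h3, ih (m+1) (b+1) (by omega)]
    have e0 : JL b (p+1) = (b+1) :: b :: JL (b+1) p := rfl
    rw [e0]
    simp only [List.cons_append, List.append_assoc]
    have e1 : b + 1 + p + 3 = b + (p+1) + 3 := by omega
    have e2 : b + 1 + p = b + (p+1) := by omega
    have e3 : m + 1 - 2 - p = m + 2 - 2 - (p+1) := by omega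
    rw [e1, e2, e3]

/-! ### erase/map helpers -/

lemma map_eraseIdx' {α β : Type*} (f : α → β) : ∀ (l : List α) (i : ℕ),
    ((l.eraseIdx i).map f : List β) = (l.map f).eraseIdx i
  | [], _ => by simp
  | (a :: l), 0 => by simp
  | (a :: l), (i+1) => by
    simp only [List.eraseIdx_cons_succ, List.map_cons]
    rw [map_eraseIdx' f l i]

lemma eraseIdx_append_right' {α : Type*} : ∀ (A B : List α) (i : ℕ),
    (A ++ B).eraseIdx (A.length + i) = A ++ B.eraseIdx i
  | [], B, i => by simp
  | (a :: A), B, i => by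
    simp only [List.cons_append, List.length_cons]
    rw [show A.length + 1 + i = (A.length + i) + 1 by omega, List.eraseIdx_cons_succ,
      eraseIdx_append_right' A B i]

lemma eraseIdx_cons7 {α : Type*} (c0 c1 c2 c3 c4 c5 c6 : α) (T : List α) (j : ℕ) :
    ((c0::c1::c2::c3::c4::c5::c6::T).eraseIdx (7+j) : List α)
      = c0::c1::c2::c3::c4::c5::c6::(T.eraseIdx j) := by
  rw [show 7+j = (6+j)+1 by omega, List.eraseIdx_cons_succ,
     show 6+j = (5+j)+1 by omega, List.eraseIdx_cons_succ,
     show 5+j = (4+j)+1 by omega, List.eraseIdx_cons_succ,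
     show 4+j = (3+j)+1 by omega, List.eraseIdx_cons_succ,
     show 3+j = (2+j)+1 by omega, List.eraseIdx_cons_succ,
     show 2+j = (1+j)+1 by omega, List.eraseIdx_cons_succ,
     show 1+j = j+1 by omega, List.eraseIdx_cons_succ]

end AuxiliaryLemmas

section RankMachinery

open scoped Classical in
noncomputable def rnk (x y z : Γ) (a : ℕ → Γ) (n vx vy vz : ℕ) (va : ℕ → ℕ) (γ : Γ) : ℕ :=
  if γ = x then vx else if γ = y then vy else if γ = z then vz
  else if h : ∃ i, i < n ∧ a i = γ then va h.choose else 0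

variable {x y z : Γ} {a : ℕ → Γ} {n : ℕ}

lemma rnk_x (vx vy vz : ℕ) (va : ℕ → ℕ) : rnk x y z a n vx vy vz va x = vx := by simp [rnk]

lemma rnk_y (vx vy vz : ℕ) (va : ℕ → ℕ) (hxy : x ≠ y) :
    rnk x y z a n vx vy vz va y = vy := by
  simp [rnk, Ne.symm hxy]

lemma rnk_z (vx vy vz : ℕ) (va : ℕ → ℕ) (hxz : x ≠ z) (hyz : y ≠ z) :
    rnk x y z a n vx vy vz va z = vz := by
  simp [rnk, Ne.symm hxz, Ne.symm hyz]

lemma rnk_a (vx vy vz : ℕ) (va : ℕ → ℕ)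
    (hax : ∀ i < n, a i ≠ x) (hay : ∀ i < n, a i ≠ y) (haz : ∀ i < n, a i ≠ z)
    (hainj : ∀ i < n, ∀ j < n, a i = a j → i = j)
    {i : ℕ} (hi : i < n) : rnk x y z a n vx vy vz va (a i) = va i := by
  have hex : ∃ j, j < n ∧ a j = a i := ⟨i, hi, rfl⟩
  simp only [rnk]
  rw [if_neg (hax i hi), if_neg (hay i hi), if_neg (haz i hi), dif_pos hex]
  have hspec := hex.choose_spec
  rw [hainj _ hspec.1 _ hi hspec.2]

lemma mem_typeC (hn : 1 ≤ n) {γ : Γ}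
    (h : γ ∈ typeC a x y z n) : γ = x ∨ γ = y ∨ γ = z ∨ ∃ i, i < n ∧ γ = a i := by
  have h' : γ = a 0 ∨ γ = x ∨ γ = a (n-1) ∨ γ = y ∨ γ = z ∨ γ = y ∨ γ = x
      ∨ γ ∈ tailPairs a n := by
    simpa [typeC] using h
  rcases h' with rfl | rfl | rfl | rfl | rfl | rfl | rfl | h'
  · exact Or.inr (Or.inr (Or.inr ⟨0, by omega, rfl⟩))
  · exact Or.inl rfl
  · exact Or.inr (Or.inr (Or.inr ⟨n-1, by omega, rfl⟩))
  · exact Or.inr (Or.inl rfl)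
  · exact Or.inr (Or.inr (Or.inl rfl))
  · exact Or.inr (Or.inl rfl)
  · exact Or.inl rfl
  · rcases mem_tailPairs_iff.mp h' with ⟨i, hi, rfl | rfl⟩
    · exact Or.inr (Or.inr (Or.inr ⟨i, by omega, rfl⟩))
    · exact Or.inr (Or.inr (Or.inr ⟨i+1, by omega, rfl⟩))

lemma rnk_inj (hn : 1 ≤ n)
    (hxy : x ≠ y) (hxz : x ≠ z) (hyz : y ≠ z)
    (hax : ∀ i < n, a i ≠ x) (hay : ∀ i < n, a i ≠ y) (haz : ∀ i < n, a i ≠ z)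
    (hainj : ∀ i < n, ∀ j < n, a i = a j → i = j)
    (vx vy vz : ℕ) (va : ℕ → ℕ)
    (d1 : vx ≠ vy) (d2 : vx ≠ vz) (d3 : vy ≠ vz)
    (d4 : ∀ i < n, va i ≠ vx) (d5 : ∀ i < n, va i ≠ vy) (d6 : ∀ i < n, va i ≠ vz)
    (d7 : ∀ i < n, ∀ j < n, va i = va j → i = j) :
    ∀ γ₁ ∈ typeC a x y z n, ∀ γ₂ ∈ typeC a x y z n,
      rnk x y z a n vx vy vz va γ₁ = rnk x y z a n vx vy vz va γ₂ → γ₁ = γ₂ := by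
  intro γ₁ h1 γ₂ h2 he
  have hra : ∀ i, i < n → rnk x y z a n vx vy vz va (a i) = va i :=
    fun i hi => rnk_a vx vy vz va hax hay haz hainj hi
  rcases mem_typeC hn h1 with rfl | rfl | rfl | ⟨i, hi, rfl⟩
  · rcases mem_typeC hn h2 with rfl | rfl | rfl | ⟨j, hj, rfl⟩
    · rfl
    · rw [rnk_x, rnk_y vx vy vz va hxy] at he; exact absurd he d1
    · rw [rnk_x, rnk_z vx vy vz va hxz hyz] at he; exact absurd he d2
    · rw [rnk_x, hra _ hj] at he; exact absurd he.symm (d4 j hj)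
  · rcases mem_typeC hn h2 with rfl | rfl | rfl | ⟨j, hj, rfl⟩
    · rw [rnk_x, rnk_y vx vy vz va hxy] at he; exact absurd he.symm d1
    · rfl
    · rw [rnk_y vx vy vz va hxy, rnk_z vx vy vz va hxz hyz] at he; exact absurd he d3
    · rw [rnk_y vx vy vz va hxy, hra _ hj] at he; exact absurd he.symm (d5 j hj)
  · rcases mem_typeC hn h2 with rfl | rfl | rfl | ⟨j, hj, rfl⟩
    · rw [rnk_x, rnk_z vx vy vz va hxz hyz] at he; exact absurd he.symm d2
    · rw [rnk_y vx vy vz va hxy, rnk_z vx vy vz va hxz hyz] at he; exact absurd he.symm d3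
    · rfl
    · rw [rnk_z vx vy vz va hxz hyz, hra _ hj] at he; exact absurd he.symm (d6 j hj)
  · rcases mem_typeC hn h2 with rfl | rfl | rfl | ⟨j, hj, rfl⟩
    · rw [rnk_x, hra _ hi] at he; exact absurd he (d4 i hi)
    · rw [rnk_y vx vy vz va hxy, hra _ hi] at he; exact absurd he (d5 i hi)
    · rw [rnk_z vx vy vz va hxz hyz, hra _ hi] at he; exact absurd he (d6 i hi)
    · rw [hra _ hi, hra _ hj] at he
      rw [d7 i hi j hj he]

lemma map_typeC' (hn : 1 ≤ n)
    (hxy : x ≠ y) (hxz : x ≠ z) (hyz : y ≠ z)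
    (hax : ∀ i < n, a i ≠ x) (hay : ∀ i < n, a i ≠ y) (haz : ∀ i < n, a i ≠ z)
    (hainj : ∀ i < n, ∀ j < n, a i = a j → i = j)
    (vx vy vz : ℕ) (va : ℕ → ℕ) {w0 wA : ℕ} {T : List ℕ}
    (hw0 : va 0 = w0) (hwA : va (n-1) = wA) (hT : tailPairs va n = T) :
    (typeC a x y z n).map (rnk x y z a n vx vy vz va)
      = w0 :: vx :: wA :: vy :: vz :: vy :: vx :: T := by
  have hra : ∀ i, i < n → rnk x y z a n vx vy vz va (a i) = va i :=
    fun i hi => rnk_a vx vy vz va hax hay haz hainj hi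
  have ht : (tailPairs a n).map (rnk x y z a n vx vy vz va) = T := by
    rw [map_tailPairs]
    rw [tailPairs_congr (fun i hi => hra _ hi), hT]
  show ((a 0 :: x :: a (n-1) :: y :: z :: y :: x :: tailPairs a n).map _ : List ℕ) = _
  simp only [List.map_cons]
  rw [rnk_x, rnk_y vx vy vz va hxy, rnk_z vx vy vz va hxz hyz,
    hra 0 (show 0 < n by omega), hra (n-1) (show n - 1 < n by omega), ht, hw0, hwA]

lemma footSortable_of_rank (S : List Γ) (r : Γ → ℕ)
    (hinj : ∀ γ₁ ∈ S, ∀ γ₂ ∈ S, r γ₁ = r γ₂ → γ₁ = γ₂)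
    (hav : Avoid (S.map r)) : FootSortable S := by
  classical
  letI lo : LinearOrder Γ := IsWellOrder.linearOrder WellOrderingRel
  set le' : Γ → Γ → Prop := fun u v => r u < r v ∨ (r u = r v ∧ u ≤ v) with hle'
  refine ⟨le', ?_, ?_⟩
  · haveI i1 : IsRefl Γ le' := ⟨fun u => Or.inr ⟨rfl, le_refl u⟩⟩
    haveI i2 : IsTrans Γ le' := by
      refine ⟨fun u v w h1 h2 => ?_⟩
      rcases h1 with h1 | ⟨e1, l1⟩ <;> rcases h2 with h2 | ⟨e2, l2⟩
      · exact Or.inl (lt_trans h1 h2)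
      · exact Or.inl (by omega)
      · exact Or.inl (by omega)
      · exact Or.inr ⟨e1.trans e2, le_trans l1 l2⟩
    haveI i3 : IsAntisymm Γ le' := by
      refine ⟨fun u v h1 h2 => ?_⟩
      rcases h1 with h1 | ⟨e1, l1⟩ <;> rcases h2 with h2 | ⟨e2, l2⟩ <;>
        first | omega | exact le_antisymm l1 l2
    haveI i4 : IsTotal Γ le' := by
      refine ⟨fun u v => ?_⟩
      rcases lt_trichotomy (r u) (r v) with h | h | h
      · exact Or.inl (Or.inl h)
      · rcases le_total u v with h' | h'
        · exact Or.inl (Or.inr ⟨h, h'⟩)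
        · exact Or.inr (Or.inr ⟨h.symm, h'⟩)
      · exact Or.inr (Or.inl h)
    haveI i5 : IsPreorder Γ le' := ⟨⟩
    haveI i6 : IsPartialOrder Γ le' := ⟨⟩
    exact ⟨⟩
  · intro A B C h1 hne1 h2 hne2 hsub
    have hB : B ∈ S := hsub.subset (by simp)
    have hC : C ∈ S := hsub.subset (by simp)
    have hA : A ∈ S := hsub.subset (by simp)
    have r1 : r A < r B := by
      rcases h1 with h | ⟨e, _⟩
      · exact h
      · exact absurd (hinj A hA B hB e) hne1
    have r2 : r B < r C := by
      rcases h2 with h | ⟨e, _⟩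
      · exact h
      · exact absurd (hinj B hB C hC e) hne2
    exact hav (r B) (r C) (r A) r1 r2 (by simpa using hsub.map r)

lemma count_tailPairs [DecidableEq Γ] {a : ℕ → Γ} {n : ℕ}
    (hainj : ∀ i < n, ∀ j < n, a i = a j → i = j) :
    ∀ m, m ≤ n → ∀ k, k < n →
      (tailPairs a m).count (a k)
        = (if k + 2 ≤ m then 1 else 0) + (if 1 ≤ k ∧ k + 1 ≤ m then 1 else 0)
  | 0, hm, k, hk => by
    rw [tailPairs_zero, List.count_nil]
    split_ifs <;> omega
  | 1, hm, k, hk => by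
    rw [tailPairs_one, List.count_nil]
    split_ifs <;> omega
  | (m+2), hm, k, hk => by
    rw [tailPairs_succ, List.count_cons, List.count_cons,
      count_tailPairs hainj (m+1) (by omega) k hk]
    have e1 : (a m = a k) = (m = k) :=
      propext ⟨fun h => hainj m (by omega) k hk h, fun h => by rw [h]⟩
    have e2 : (a (m+1) = a k) = (m+1 = k) :=
      propext ⟨fun h => hainj (m+1) (by omega) k hk h, fun h => by rw [h]⟩
    simp only [beq_iff_eq, e1, e2]
    split_ifs <;> omega

end RankMachinery

/-- Every Type C sock ordering (n ≥ 3, pairwise distinct colors) is 2-bounded, not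
foot-sortable, and minimal. -/
theorem statement17 {Γ : Type u} [DecidableEq Γ] (n : ℕ) (hn : 3 ≤ n)
    (x y z : Γ) (a : ℕ → Γ)
    (hxy : x ≠ y) (hxz : x ≠ z) (hyz : y ≠ z)
    (hax : ∀ i < n, a i ≠ x) (hay : ∀ i < n, a i ≠ y) (haz : ∀ i < n, a i ≠ z)
    (hainj : ∀ i < n, ∀ j < n, a i = a j → i = j) :
    TwoBounded (typeC a x y z n) ∧ ¬ FootSortable (typeC a x y z n) ∧
      ∀ i < (typeC a x y z n).length, FootSortable ((typeC a x y z n).eraseIdx i) := by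
  have hn1 : 1 ≤ n := by omega
  refine ⟨?_, ?_, ?_⟩
  · -- Two-bounded
    intro γ
    have htc : typeC a x y z n = [a 0, x, a (n-1), y, z, y, x] ++ tailPairs a n := rfl
    show (typeC a x y z n).count γ ≤ 2
    rw [htc, List.count_append]
    by_cases hgx : γ = x
    · rw [hgx]
      have ht : (tailPairs a n).count x = 0 := by
        rw [List.count_eq_zero]
        intro hm
        rcases mem_tailPairs_iff.mp hm with ⟨i, hi, h | h⟩
        · exact hax i (by omega) h.symm
        · exact hax (i+1) (by omega) h.symm
      have hh : ([a 0, x, a (n-1), y, z, y, x] : List Γ).count x = 2 := by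
        simp [List.count_cons, hax 0 (by omega), hax (n-1) (by omega), Ne.symm hxy,
          Ne.symm hxz]
      rw [ht, hh]
    · by_cases hgy : γ = y
      · rw [hgy]
        have ht : (tailPairs a n).count y = 0 := by
          rw [List.count_eq_zero]
          intro hm
          rcases mem_tailPairs_iff.mp hm with ⟨i, hi, h | h⟩
          · exact hay i (by omega) h.symm
          · exact hay (i+1) (by omega) h.symm
        have hh : ([a 0, x, a (n-1), y, z, y, x] : List Γ).count y = 2 := by
          simp [List.count_cons, hay 0 (by omega), hay (n-1) (by omega), hxy, Ne.symm hyz]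
        rw [ht, hh]
      · by_cases hgz : γ = z
        · rw [hgz]
          have ht : (tailPairs a n).count z = 0 := by
            rw [List.count_eq_zero]
            intro hm
            rcases mem_tailPairs_iff.mp hm with ⟨i, hi, h | h⟩
            · exact haz i (by omega) h.symm
            · exact haz (i+1) (by omega) h.symm
          have hh : ([a 0, x, a (n-1), y, z, y, x] : List Γ).count z = 1 := by
            simp [List.count_cons, haz 0 (by omega), haz (n-1) (by omega), hxz, hyz]
          rw [ht, hh]
          omega
        · by_cases hga : ∃ k, k < n ∧ γ = a k
          · obtain ⟨k, hk, rfl⟩ := hga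
            rw [count_tailPairs hainj n le_rfl k hk]
            have e0 : (a 0 = a k) = (0 = k) :=
              propext ⟨fun h => hainj 0 (by omega) k hk h, fun h => by rw [← h]⟩
            have e1 : (a (n-1) = a k) = (n-1 = k) :=
              propext ⟨fun h => hainj (n-1) (by omega) k hk h, fun h => by rw [← h]⟩
            have hh : ([a 0, x, a (n-1), y, z, y, x] : List Γ).count (a k)
                = (if 0 = k then 1 else 0) + (if n-1 = k then 1 else 0) := by
              simp only [List.count_cons, List.count_nil, beq_iff_eq, e0, e1,
                Ne.symm (hax k hk), Ne.symm (hay k hk), Ne.symm (haz k hk)]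
              split_ifs <;> first | contradiction | omega
            rw [hh]
            split_ifs <;> omega
          · have h1 : ([a 0, x, a (n-1), y, z, y, x] : List Γ).count γ = 0 := by
              rw [List.count_eq_zero]
              intro hm
              simp only [List.mem_cons, List.not_mem_nil, or_false] at hm
              rcases hm with h | h | h | h | h | h | h
              · exact hga ⟨0, by omega, h⟩
              · exact hgx h
              · exact hga ⟨n-1, by omega, h⟩
              · exact hgy h
              · exact hgz h
              · exact hgy h
              · exact hgx h
            have h2 : (tailPairs a n).count γ = 0 := by
              rw [List.count_eq_zero]
              intro hm
              rcases mem_tailPairs_iff.mp hm with ⟨i, hi, h | h⟩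
              · exact hga ⟨i, by omega, h⟩
              · exact hga ⟨i+1, by omega, h⟩
            rw [h1, h2]
            omega
  · -- not foot-sortable
    rintro ⟨le, hlin, hN⟩
    have htot : ∀ u v : Γ, le u v ∨ le v u := hlin.toTotal.total
    have hsub_yza : ∀ k, k < n → [y, z, a k] <+ typeC a x y z n := by
      intro k hk
      have base : [a k] <+ tailPairs a n :=
        List.singleton_sublist.mpr (mem_tailPairs hk (by omega))
      exact ((((((base.cons x).cons y).cons₂ z).cons₂ y).cons (a (n-1))).cons x).cons (a 0)
    have hsub_zya : ∀ k, k < n → [z, y, a k] <+ typeC a x y z n := by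
      intro k hk
      have base : [a k] <+ tailPairs a n :=
        List.singleton_sublist.mpr (mem_tailPairs hk (by omega))
      exact ((((((base.cons x).cons₂ y).cons₂ z).cons y).cons (a (n-1))).cons x).cons (a 0)
    have hsub_yzx : [y, z, x] <+ typeC a x y z n := by
      have base : [x] <+ x :: tailPairs a n := (List.nil_sublist _).cons₂ x
      exact (((((base.cons y).cons₂ z).cons₂ y).cons (a (n-1))).cons x).cons (a 0)
    have hsub_zyx : [z, y, x] <+ typeC a x y z n := by
      have base : [x] <+ x :: tailPairs a n := (List.nil_sublist _).cons₂ x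
      exact (((((base.cons₂ y).cons₂ z).cons y).cons (a (n-1))).cons x).cons (a 0)
    have hsub_xAy : [x, a (n-1), y] <+ typeC a x y z n := by
      have base : [y] <+ y :: z :: y :: x :: tailPairs a n :=
        (List.nil_sublist _).cons₂ y
      exact ((base.cons₂ (a (n-1))).cons₂ x).cons (a 0)
    have hsub_xAz : [x, a (n-1), z] <+ typeC a x y z n := by
      have base : [z] <+ z :: y :: x :: tailPairs a n := (List.nil_sublist _).cons₂ z
      exact (((base.cons y).cons₂ (a (n-1))).cons₂ x).cons (a 0)
    have hsub_a0xy : [a 0, x, y] <+ typeC a x y z n := by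
      have base : [y] <+ y :: z :: y :: x :: tailPairs a n :=
        (List.nil_sublist _).cons₂ y
      exact ((base.cons (a (n-1))).cons₂ x).cons₂ (a 0)
    have hsub_a0xz : [a 0, x, z] <+ typeC a x y z n := by
      have base : [z] <+ z :: y :: x :: tailPairs a n := (List.nil_sublist _).cons₂ z
      exact (((base.cons y).cons (a (n-1))).cons₂ x).cons₂ (a 0)
    have hF5 : ∀ i, i + 2 ≤ n → [x, a i, a (i+1)] <+ typeC a x y z n := by
      intro i hi
      have base := pair_sublist_tailPairs a n i hi
      exact ((((((base.cons x).cons y).cons z).cons y).cons (a (n-1))).cons₂ x).cons (a 0)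
    have key : ∀ u v : Γ, le u v → u ≠ v → u ≠ x → (∀ k, k < n → u ≠ a k) →
        (∀ k, k < n → [u, v, a k] <+ typeC a x y z n) → ([u, v, x] <+ typeC a x y z n) →
        ([x, a (n-1), u] <+ typeC a x y z n) → ([a 0, x, u] <+ typeC a x y z n) →
        False := by
      intro u v huv huvne hux hua hsa hsx hxAu ha0xu
      have hmin : ∀ w, (w = x ∨ ∃ k, k < n ∧ w = a k) → le u w := by
        intro w hw
        rcases htot u w with h | h
        · exact h
        · exfalso
          have hwu : w ≠ u := by
            rcases hw with rfl | ⟨k, hk, rfl⟩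
            · exact Ne.symm hux
            · exact fun hh => (hua k hk) hh.symm
          have hsubw : [u, v, w] <+ typeC a x y z n := by
            rcases hw with rfl | ⟨k, hk, rfl⟩
            · exact hsx
            · exact hsa k hk
          exact hN w u v h hwu huv huvne hsubw
      have hAx : le (a (n-1)) x := by
        rcases htot (a (n-1)) x with h | h
        · exact h
        · exfalso
          exact hN u x (a (n-1)) (hmin x (Or.inl rfl)) hux h
            (fun hh => hax (n-1) (by omega) hh.symm) hxAu
      have hdesc : ∀ j, j ≤ n - 1 → le (a (n - 1 - j)) x := by
        intro j
        induction j with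
        | zero => intro _; exact hAx
        | succ j ih =>
          intro hj
          rcases htot (a (n - 1 - (j+1))) x with h | h
          · exact h
          · exfalso
            have hij : n - 1 - j = (n - 1 - (j+1)) + 1 := by omega
            have hle1 : le (a ((n - 1 - (j+1)) + 1)) x := by
              rw [← hij]; exact ih (by omega)
            exact hN (a ((n - 1 - (j+1)) + 1)) x (a (n - 1 - (j+1)))
              hle1 (hax _ (by omega)) h (fun hh => hax _ (by omega) hh.symm)
              (hF5 (n - 1 - (j+1)) (by omega))
      have hfin := hdesc (n-1) le_rfl
      rw [Nat.sub_self] at hfin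
      exact hN u (a 0) x (hmin (a 0) (Or.inr ⟨0, by omega, rfl⟩))
        (hua 0 (by omega)) hfin (hax 0 (by omega)) ha0xu
    rcases htot y z with h | h
    · exact key y z h hyz (Ne.symm hxy) (fun k hk hh => hay k hk hh.symm)
        hsub_yza hsub_yzx hsub_xAy hsub_a0xy
    · exact key z y h (Ne.symm hyz) (Ne.symm hxz) (fun k hk hh => haz k hk hh.symm)
        hsub_zya hsub_zyx hsub_xAz hsub_a0xz
  · -- minimality
    intro i hi
    have hlen : (typeC a x y z n).length = 2*n + 5 := by
      show (a 0 :: x :: a (n-1) :: y :: z :: y :: x :: tailPairs a n).length = 2*n+5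
      simp [length_tailPairs]
      omega
    rw [hlen] at hi
    rcases Nat.lt_or_ge i 7 with h7 | h7
    · interval_cases i
      · -- delete a 0
        refine footSortable_of_rank _ (rnk x y z a n (n+2) 0 1 (fun i => 2 + (n-1) - i)) ?_ ?_
        · intro γ1 hm1 γ2 hm2 he
          exact rnk_inj hn1 hxy hxz hyz hax hay haz hainj (n+2) 0 1 _
            (by omega) (by omega) (by omega)
            (fun i hi => by show 2 + (n-1) - i ≠ n+2; omega)
            (fun i hi => by show 2 + (n-1) - i ≠ 0; omega)
            (fun i hi => by show 2 + (n-1) - i ≠ 1; omega)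
            (fun i hi j hj h => by
              have h' : 2 + (n-1) - i = 2 + (n-1) - j := h
              omega)
            γ1 ((List.eraseIdx_sublist _ _).subset hm1)
            γ2 ((List.eraseIdx_sublist _ _).subset hm2) he
        · rw [map_eraseIdx', map_typeC' hn1 hxy hxz hyz hax hay haz hainj (n+2) 0 1 _
            (w0 := n+1) (wA := 2) (by show 2 + (n-1) - 0 = n+1; omega)
            (by show 2 + (n-1) - (n-1) = 2; omega) (tailPairs_desc n 2)]
          have hH : Avoid [n+2, 2, 0, 1, 0, n+2] := by
            intro p q s h1 h2 hsub
            simp [sub3_cons, sub2_cons] at hsub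
            omega
          have hB : AscBnd [n+2, 2, 0, 1, 0, n+2] 2 := by
            intro p q hsub hlt
            simp [sub2_cons] at hsub
            omega
          exact avoid_append_JL hH hB
      · -- delete first x
        refine footSortable_of_rank _ (rnk x y z a n 2 0 1 (fun i => 3 + (n-1) - i)) ?_ ?_
        · intro γ1 hm1 γ2 hm2 he
          exact rnk_inj hn1 hxy hxz hyz hax hay haz hainj 2 0 1 _
            (by omega) (by omega) (by omega)
            (fun i hi => by show 3 + (n-1) - i ≠ 2; omega)
            (fun i hi => by show 3 + (n-1) - i ≠ 0; omega)
            (fun i hi => by show 3 + (n-1) - i ≠ 1; omega)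
            (fun i hi j hj h => by
              have h' : 3 + (n-1) - i = 3 + (n-1) - j := h
              omega)
            γ1 ((List.eraseIdx_sublist _ _).subset hm1)
            γ2 ((List.eraseIdx_sublist _ _).subset hm2) he
        · rw [map_eraseIdx', map_typeC' hn1 hxy hxz hyz hax hay haz hainj 2 0 1 _
            (w0 := n+2) (wA := 3) (by show 3 + (n-1) - 0 = n+2; omega)
            (by show 3 + (n-1) - (n-1) = 3; omega) (tailPairs_desc n 3)]
          have hH : Avoid [n+2, 3, 0, 1, 0, 2] := by
            intro p q s h1 h2 hsub
            simp [sub3_cons, sub2_cons] at hsub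
            omega
          have hB : AscBnd [n+2, 3, 0, 1, 0, 2] 3 := by
            intro p q hsub hlt
            simp [sub2_cons] at hsub
            omega
          exact avoid_append_JL hH hB
      · -- delete a (n-1)
        refine footSortable_of_rank _ (rnk x y z a n 2 0 1 (fun i => 3 + (n-1) - i)) ?_ ?_
        · intro γ1 hm1 γ2 hm2 he
          exact rnk_inj hn1 hxy hxz hyz hax hay haz hainj 2 0 1 _
            (by omega) (by omega) (by omega)
            (fun i hi => by show 3 + (n-1) - i ≠ 2; omega)
            (fun i hi => by show 3 + (n-1) - i ≠ 0; omega)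
            (fun i hi => by show 3 + (n-1) - i ≠ 1; omega)
            (fun i hi j hj h => by
              have h' : 3 + (n-1) - i = 3 + (n-1) - j := h
              omega)
            γ1 ((List.eraseIdx_sublist _ _).subset hm1)
            γ2 ((List.eraseIdx_sublist _ _).subset hm2) he
        · rw [map_eraseIdx', map_typeC' hn1 hxy hxz hyz hax hay haz hainj 2 0 1 _
            (w0 := n+2) (wA := 3) (by show 3 + (n-1) - 0 = n+2; omega)
            (by show 3 + (n-1) - (n-1) = 3; omega) (tailPairs_desc n 3)]
          have hH : Avoid [n+2, 2, 0, 1, 0, 2] := by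
            intro p q s h1 h2 hsub
            simp [sub3_cons, sub2_cons] at hsub
            omega
          have hB : AscBnd [n+2, 2, 0, 1, 0, 2] 3 := by
            intro p q hsub hlt
            simp [sub2_cons] at hsub
            omega
          exact avoid_append_JL hH hB
      · -- delete first y
        refine footSortable_of_rank _ (rnk x y z a n 0 1 2 (fun i => 3 + (n-1) - i)) ?_ ?_
        · intro γ1 hm1 γ2 hm2 he
          exact rnk_inj hn1 hxy hxz hyz hax hay haz hainj 0 1 2 _
            (by omega) (by omega) (by omega)
            (fun i hi => by show 3 + (n-1) - i ≠ 0; omega)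
            (fun i hi => by show 3 + (n-1) - i ≠ 1; omega)
            (fun i hi => by show 3 + (n-1) - i ≠ 2; omega)
            (fun i hi j hj h => by
              have h' : 3 + (n-1) - i = 3 + (n-1) - j := h
              omega)
            γ1 ((List.eraseIdx_sublist _ _).subset hm1)
            γ2 ((List.eraseIdx_sublist _ _).subset hm2) he
        · rw [map_eraseIdx', map_typeC' hn1 hxy hxz hyz hax hay haz hainj 0 1 2 _
            (w0 := n+2) (wA := 3) (by show 3 + (n-1) - 0 = n+2; omega)
            (by show 3 + (n-1) - (n-1) = 3; omega) (tailPairs_desc n 3)]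
          have hH : Avoid [n+2, 0, 3, 2, 1, 0] := by
            intro p q s h1 h2 hsub
            simp [sub3_cons, sub2_cons] at hsub
            omega
          have hB : AscBnd [n+2, 0, 3, 2, 1, 0] 3 := by
            intro p q hsub hlt
            simp [sub2_cons] at hsub
            omega
          exact avoid_append_JL hH hB
      · -- delete z
        refine footSortable_of_rank _ (rnk x y z a n 0 1 2 (fun i => 3 + (n-1) - i)) ?_ ?_
        · intro γ1 hm1 γ2 hm2 he
          exact rnk_inj hn1 hxy hxz hyz hax hay haz hainj 0 1 2 _
            (by omega) (by omega) (by omega)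
            (fun i hi => by show 3 + (n-1) - i ≠ 0; omega)
            (fun i hi => by show 3 + (n-1) - i ≠ 1; omega)
            (fun i hi => by show 3 + (n-1) - i ≠ 2; omega)
            (fun i hi j hj h => by
              have h' : 3 + (n-1) - i = 3 + (n-1) - j := h
              omega)
            γ1 ((List.eraseIdx_sublist _ _).subset hm1)
            γ2 ((List.eraseIdx_sublist _ _).subset hm2) he
        · rw [map_eraseIdx', map_typeC' hn1 hxy hxz hyz hax hay haz hainj 0 1 2 _
            (w0 := n+2) (wA := 3) (by show 3 + (n-1) - 0 = n+2; omega)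
            (by show 3 + (n-1) - (n-1) = 3; omega) (tailPairs_desc n 3)]
          have hH : Avoid [n+2, 0, 3, 1, 1, 0] := by
            intro p q s h1 h2 hsub
            simp [sub3_cons, sub2_cons] at hsub
            omega
          have hB : AscBnd [n+2, 0, 3, 1, 1, 0] 3 := by
            intro p q hsub hlt
            simp [sub2_cons] at hsub
            omega
          exact avoid_append_JL hH hB
      · -- delete second y
        refine footSortable_of_rank _ (rnk x y z a n 0 2 1 (fun i => 3 + (n-1) - i)) ?_ ?_
        · intro γ1 hm1 γ2 hm2 he
          exact rnk_inj hn1 hxy hxz hyz hax hay haz hainj 0 2 1 _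
            (by omega) (by omega) (by omega)
            (fun i hi => by show 3 + (n-1) - i ≠ 0; omega)
            (fun i hi => by show 3 + (n-1) - i ≠ 2; omega)
            (fun i hi => by show 3 + (n-1) - i ≠ 1; omega)
            (fun i hi j hj h => by
              have h' : 3 + (n-1) - i = 3 + (n-1) - j := h
              omega)
            γ1 ((List.eraseIdx_sublist _ _).subset hm1)
            γ2 ((List.eraseIdx_sublist _ _).subset hm2) he
        · rw [map_eraseIdx', map_typeC' hn1 hxy hxz hyz hax hay haz hainj 0 2 1 _
            (w0 := n+2) (wA := 3) (by show 3 + (n-1) - 0 = n+2; omega)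
            (by show 3 + (n-1) - (n-1) = 3; omega) (tailPairs_desc n 3)]
          have hH : Avoid [n+2, 0, 3, 2, 1, 0] := by
            intro p q s h1 h2 hsub
            simp [sub3_cons, sub2_cons] at hsub
            omega
          have hB : AscBnd [n+2, 0, 3, 2, 1, 0] 3 := by
            intro p q hsub hlt
            simp [sub2_cons] at hsub
            omega
          exact avoid_append_JL hH hB
      · -- delete second x
        refine footSortable_of_rank _ (rnk x y z a n 0 1 2 (fun i => 3 + (n-1) - i)) ?_ ?_
        · intro γ1 hm1 γ2 hm2 he
          exact rnk_inj hn1 hxy hxz hyz hax hay haz hainj 0 1 2 _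
            (by omega) (by omega) (by omega)
            (fun i hi => by show 3 + (n-1) - i ≠ 0; omega)
            (fun i hi => by show 3 + (n-1) - i ≠ 1; omega)
            (fun i hi => by show 3 + (n-1) - i ≠ 2; omega)
            (fun i hi j hj h => by
              have h' : 3 + (n-1) - i = 3 + (n-1) - j := h
              omega)
            γ1 ((List.eraseIdx_sublist _ _).subset hm1)
            γ2 ((List.eraseIdx_sublist _ _).subset hm2) he
        · rw [map_eraseIdx', map_typeC' hn1 hxy hxz hyz hax hay haz hainj 0 1 2 _
            (w0 := n+2) (wA := 3) (by show 3 + (n-1) - 0 = n+2; omega)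
            (by show 3 + (n-1) - (n-1) = 3; omega) (tailPairs_desc n 3)]
          have hH : Avoid [n+2, 0, 3, 1, 2, 1] := by
            intro p q s h1 h2 hsub
            simp [sub3_cons, sub2_cons] at hsub
            omega
          have hB : AscBnd [n+2, 0, 3, 1, 2, 1] 3 := by
            intro p q hsub hlt
            simp [sub2_cons] at hsub
            omega
          exact avoid_append_JL hH hB
    · -- tail deletions
      obtain ⟨j, rfl⟩ : ∃ j, i = 7 + j := ⟨i - 7, by omega⟩
      have hj : j < 2*(n-1) := by omega
      have hinjpart : ∀ p : ℕ, p + 2 ≤ n → ∀ γ1 ∈ (typeC a x y z n).eraseIdx (7+j),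
          ∀ γ2 ∈ (typeC a x y z n).eraseIdx (7+j),
          rnk x y z a n (p+3) 0 1
            (fun i => 2 + (n - 1 - i) + (if i ≤ n - 2 - p then 2 else 0)) γ1
          = rnk x y z a n (p+3) 0 1
            (fun i => 2 + (n - 1 - i) + (if i ≤ n - 2 - p then 2 else 0)) γ2 → γ1 = γ2 := by
        intro p hp γ1 hm1 γ2 hm2 he
        refine rnk_inj hn1 hxy hxz hyz hax hay haz hainj (p+3) 0 1 _
          (by omega) (by omega) (by omega)
          (fun i hi => by
            show 2 + (n - 1 - i) + (if i ≤ n - 2 - p then 2 else 0) ≠ p+3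
            split_ifs <;> omega)
          (fun i hi => by
            show 2 + (n - 1 - i) + (if i ≤ n - 2 - p then 2 else 0) ≠ 0
            split_ifs <;> omega)
          (fun i hi => by
            show 2 + (n - 1 - i) + (if i ≤ n - 2 - p then 2 else 0) ≠ 1
            split_ifs <;> omega)
          (fun i hi j' hj' h => by
            have h' : 2 + (n - 1 - i) + (if i ≤ n - 2 - p then 2 else 0)
                = 2 + (n - 1 - j') + (if j' ≤ n - 2 - p then 2 else 0) := h
            split_ifs at h' <;> omega)
          γ1 ((List.eraseIdx_sublist _ _).subset hm1)
          γ2 ((List.eraseIdx_sublist _ _).subset hm2) he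
      rcases Nat.even_or_odd j with ⟨p, rfl⟩ | ⟨p, rfl⟩
      · have hp : p + 2 ≤ n := by omega
        refine footSortable_of_rank _ (rnk x y z a n (p+3) 0 1
          (fun i => 2 + (n - 1 - i) + (if i ≤ n - 2 - p then 2 else 0)))
          (hinjpart p hp) ?_
        rw [map_eraseIdx', map_typeC' hn1 hxy hxz hyz hax hay haz hainj (p+3) 0 1 _
          (w0 := n+3) (wA := 2)
          (by show 2 + (n - 1 - 0) + (if 0 ≤ n - 2 - p then 2 else 0) = n+3
              rw [if_pos (Nat.zero_le _)]; omega)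
          (by show 2 + (n - 1 - (n-1)) + (if n-1 ≤ n - 2 - p then 2 else 0) = 2
              rw [if_neg (by omega)]; omega)
          (tailPairs_W p n 2 hp)]
        rw [eraseIdx_cons7]
        rw [show p + p = (JL 2 p).length + 0 by rw [length_JL]; omega]
        rw [eraseIdx_append_right']
        have hH : Avoid [n+3, p+3, 2, 0, 1, 0, p+3] := by
          intro p' q' s' h1 h2 hsub
          simp [sub3_cons, sub2_cons] at hsub
          omega
        have hB : AscBnd [n+3, p+3, 2, 0, 1, 0, p+3] 2 := by
          intro p' q' hsub hlt
          simp [sub2_cons] at hsub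
          omega
        have A2 : Avoid ([n+3, p+3, 2, 0, 1, 0, p+3] ++ JL 2 p) := avoid_append_JL hH hB
        have B2 : AscBnd ([n+3, p+3, 2, 0, 1, 0, p+3] ++ JL 2 p) (2+p) :=
          ascbnd_append_JL (ascbnd_mono hB (by omega)) (by omega)
        have A3 : Avoid (([n+3, p+3, 2, 0, 1, 0, p+3] ++ JL 2 p) ++ [2+p]) :=
          avoid_append_single A2 B2
        have B3 : AscBnd (([n+3, p+3, 2, 0, 1, 0, p+3] ++ JL 2 p) ++ [2+p]) (2+p+3) :=
          ascbnd_append_single (ascbnd_append_JL (ascbnd_mono hB (by omega)) (by omega))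
            (by omega)
        have A4 := avoid_append_JL (k := n-2-p) A3 B3
        rw [List.append_assoc, List.append_assoc] at A4
        exact A4
      · have hp : p + 2 ≤ n := by omega
        refine footSortable_of_rank _ (rnk x y z a n (p+3) 0 1
          (fun i => 2 + (n - 1 - i) + (if i ≤ n - 2 - p then 2 else 0)))
          (hinjpart p hp) ?_
        rw [map_eraseIdx', map_typeC' hn1 hxy hxz hyz hax hay haz hainj (p+3) 0 1 _
          (w0 := n+3) (wA := 2)
          (by show 2 + (n - 1 - 0) + (if 0 ≤ n - 2 - p then 2 else 0) = n+3
              rw [if_pos (Nat.zero_le _)]; omega)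
          (by show 2 + (n - 1 - (n-1)) + (if n-1 ≤ n - 2 - p then 2 else 0) = 2
              rw [if_neg (by omega)]; omega)
          (tailPairs_W p n 2 hp)]
        rw [eraseIdx_cons7]
        rw [show 2*p + 1 = (JL 2 p).length + 1 by rw [length_JL]]
        rw [eraseIdx_append_right']
        have hH : Avoid [n+3, p+3, 2, 0, 1, 0, p+3] := by
          intro p' q' s' h1 h2 hsub
          simp [sub3_cons, sub2_cons] at hsub
          omega
        have hB : AscBnd [n+3, p+3, 2, 0, 1, 0, p+3] 2 := by
          intro p' q' hsub hlt
          simp [sub2_cons] at hsub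
          omega
        have A2 : Avoid ([n+3, p+3, 2, 0, 1, 0, p+3] ++ JL 2 p) := avoid_append_JL hH hB
        have B2 : AscBnd ([n+3, p+3, 2, 0, 1, 0, p+3] ++ JL 2 p) (2+p+3) :=
          ascbnd_append_JL (ascbnd_mono hB (by omega)) (by omega)
        have A3 : Avoid (([n+3, p+3, 2, 0, 1, 0, p+3] ++ JL 2 p) ++ [2+p+3]) :=
          avoid_append_single A2 B2
        have B3 : AscBnd (([n+3, p+3, 2, 0, 1, 0, p+3] ++ JL 2 p) ++ [2+p+3]) (2+p+3) :=
          ascbnd_append_single B2 (by omega)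
        have A4 := avoid_append_JL (k := n-2-p) A3 B3
        rw [List.append_assoc, List.append_assoc] at A4
        exact A4
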